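/- arXiv:2405.10639 — 6 statements merged into one kernel-verified Lean document; each statement's English description precedes it below -/
import Mathlib

section
/- Suppose a family S of subsets of [n] satisfies Reimer's conditions with filter F, and F contains all subsets of [n] of size n-1. If a set A ∈ S is mapped to the full set [n] ∈ F under the bijection, then A = [n]. -/
/-- If `S` satisfies Reimer's conditions with filter `F` containing all subsets
of `[n]` of size `n-1`, and `A ∈ S` is mapped to `[n] ∈ F`, then `A = [n]`. -/
theorem stmt_2 (n : ℕ) (S F : Finset (Finset ℕ)) (f : Finset ℕ → Finset ℕ)
    (hS : ∀ A ∈ S, A ⊆ Finset.Icc 1 n)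
    (hF : ∀ B ∈ F, B ⊆ Finset.Icc 1 n)
    (hfilter : ∀ B ∈ F, ∀ i ∈ Finset.Icc 1 n, insert i B ∈ F)
    (hbij : Set.BijOn f ↑S ↑F)
    (hsub : ∀ A ∈ S, A ⊆ f A)
    (hdisj : ∀ A ∈ S, ∀ B ∈ S, A ≠ B →
      Disjoint (Finset.Icc A (f A)) (Finset.Icc B (f B)))
    (hall : ∀ B ⊆ Finset.Icc 1 n, B.card = n - 1 → B ∈ F)
    (A : Finset ℕ) (hA : A ∈ S) (hfA : f A = Finset.Icc 1 n) :
    A = Finset.Icc 1 n := by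
  by_contra h
  have hss : A ⊂ Finset.Icc 1 n := (hS A hA).ssubset_of_ne h
  obtain ⟨i, hi, hiA⟩ := Finset.exists_of_ssubset hss
  set B : Finset ℕ := (Finset.Icc 1 n).erase i with hB
  have hBsub : B ⊆ Finset.Icc 1 n := Finset.erase_subset _ _
  have hBcard : B.card = n - 1 := by
    rw [hB, Finset.card_erase_of_mem hi, Nat.card_Icc]; omega
  have hBF : B ∈ F := hall B hBsub hBcard
  obtain ⟨C, hC, hfC⟩ := hbij.surjOn hBF
  have hCS : C ∈ S := hC
  have hBne : B ≠ Finset.Icc 1 n := by intro heq; have := Finset.notMem_erase i (Finset.Icc 1 n); rw [← hB, heq] at this; exact this hi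
  have hne : C ≠ A := by
    intro heq
    exact hBne (by rw [← hfC, heq, hfA])
  have hdis := hdisj C hCS A hA hne
  have h1 : B ∈ Finset.Icc C (f C) := by
    rw [Finset.mem_Icc, hfC]
    exact ⟨hsub C hCS |>.trans (le_of_eq hfC), le_rfl⟩
  have h2 : B ∈ Finset.Icc A (f A) := by
    rw [Finset.mem_Icc, hfA]
    refine ⟨fun x hx => Finset.mem_erase.2 ⟨fun hxi => hiA (hxi ▸ hx), hS A hA hx⟩, hBsub⟩
  exact hdis.forall_ne_finset h1 h2 rfl
end

section
/- Suppose n is even, n ≥ 6, and S = {S_0, S_1, ..., S_{n+2}} are subsets of [n] mapped bijectively (preserving the subset condition S_i ⊆ F_i and with pairwise disjoint intervals [S_i, F_i]) to the filter F = {F_0, ..., F_{n+2}} where F_0 = [n], F_i = [n] \ {i} for 1 ≤ i ≤ n, F_{n+1} = [n] \ {1,2}, F_{n+2} = [n] \ {3,4}. Then for each p ∈ [n], |S_p| + |{q ∈ [n] \ {p} : p ∈ S_q}| ≥ n - 1. -/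
/-- With `n` even, `n ≥ 6`, sets `S 0, …, S (n+2) ⊆ [n]` mapped bijectively to the
filter `F 0 = [n]`, `F i = [n] \ {i}` (`1 ≤ i ≤ n`), `F (n+1) = [n] \ {1,2}`,
`F (n+2) = [n] \ {3,4}`, satisfying the subset and non-interference conditions, for each
`p ∈ [n]` we have `|S p| + |{q ∈ [n] \ {p} : p ∈ S q}| ≥ n - 1`. -/
theorem stmt_5 (n : ℕ) (hn : Even n) (hn6 : 6 ≤ n) (S F : ℕ → Finset ℕ)
    (hF0 : F 0 = Finset.Icc 1 n)
    (hFi : ∀ i, 1 ≤ i → i ≤ n → F i = (Finset.Icc 1 n).erase i)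
    (hFn1 : F (n + 1) = Finset.Icc 1 n \ {1, 2})
    (hFn2 : F (n + 2) = Finset.Icc 1 n \ {3, 4})
    (hsub : ∀ i ≤ n + 2, S i ⊆ F i)
    (hinj : ∀ i ≤ n + 2, ∀ j ≤ n + 2, S i = S j → i = j)
    (hdisj : ∀ i ≤ n + 2, ∀ j ≤ n + 2, i ≠ j →
      Disjoint (Finset.Icc (S i) (F i)) (Finset.Icc (S j) (F j))) :
    ∀ p ∈ Finset.Icc 1 n,
      n - 1 ≤ (S p).card + (((Finset.Icc 1 n).erase p).filter fun q => p ∈ S q).card := by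
  intro p hp
  rw [Finset.mem_Icc] at hp
  obtain ⟨hp1, hpn⟩ := hp
  set T := ((Finset.Icc 1 n).erase p).filter (fun q => p ∈ S q) with hT
  have key : (Finset.Icc 1 n).erase p ⊆ S p ∪ T := by
    intro q hq
    obtain ⟨hqp, hq'⟩ := Finset.mem_erase.mp hq
    rw [Finset.mem_Icc] at hq'
    by_cases hqS : q ∈ S p
    · exact Finset.mem_union_left _ hqS
    · refine Finset.mem_union_right _ ?_
      rw [hT, Finset.mem_filter]
      refine ⟨hq, ?_⟩
      by_contra hpS
      have hd := hdisj p (by omega) q (by omega) (fun h => hqp h.symm)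
      have hSp : S p ⊆ (Finset.Icc 1 n).erase p := by
        rw [← hFi p hp1 hpn]; exact hsub p (by omega)
      have hSq : S q ⊆ (Finset.Icc 1 n).erase q := by
        rw [← hFi q hq'.1 hq'.2]; exact hsub q (by omega)
      have hmem : S p ∪ S q ∈ Finset.Icc (S p) (F p) ∩ Finset.Icc (S q) (F q) := by
        rw [Finset.mem_inter, Finset.mem_Icc, Finset.mem_Icc,
          hFi p hp1 hpn, hFi q hq'.1 hq'.2]
        refine ⟨⟨Finset.subset_union_left, Finset.union_subset hSp ?_⟩,
          ⟨Finset.subset_union_right, Finset.union_subset ?_ hSq⟩⟩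
        · intro x hx
          have := hSq hx
          rw [Finset.mem_erase] at this ⊢
          exact ⟨fun h => hpS (h ▸ hx), this.2⟩
        · intro x hx
          have := hSp hx
          rw [Finset.mem_erase] at this ⊢
          exact ⟨fun h => hqS (h ▸ hx), this.2⟩
      rw [Finset.disjoint_left] at hd
      exact hd (Finset.mem_inter.mp hmem).1 (Finset.mem_inter.mp hmem).2
  calc n - 1 = ((Finset.Icc 1 n).erase p).card := by
        rw [Finset.card_erase_of_mem (Finset.mem_Icc.mpr ⟨hp1, hpn⟩),
          Nat.card_Icc]; omega
    _ ≤ (S p ∪ T).card := Finset.card_le_card key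
    _ ≤ (S p).card + T.card := Finset.card_union_le _ _
end

section
/- Let n be even and let S = {S_0, S_1, ..., S_{n+2}} satisfy Reimer's conditions with respect to the filter F = {[n]} ∪ {[n]\{i} : i ∈ [n]} ∪ {[n]\{1,2}, [n]\{3,4}} (with S_i mapped to F_i as indexed). Suppose S fails the abundance condition, i.e., every element of [n] belongs to fewer than (n+3)/2 of the sets S_i. If x is the minimum of |S_i| over all i, then n ≥ 4x + 4. -/
/-- `n` even, `S 0, …, S (n+2)` satisfying Reimer's conditions with the filter
`F 0 = [n]`, `F i = [n] \ {i}` (`1 ≤ i ≤ n`), `F (n+1) = [n] \ {1,2}`, `F (n+2) = [n] \ {3,4}`.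
If `S` fails abundance (every element of `[n]` is in fewer than `(n+3)/2` of the `n+3` sets)
and `x` is the minimum of the `|S i|`, then `n ≥ 4x + 4`. -/
theorem stmt_7 (n : ℕ) (hn : Even n) (S F : ℕ → Finset ℕ)
    (hF0 : F 0 = Finset.Icc 1 n)
    (hFi : ∀ i, 1 ≤ i → i ≤ n → F i = (Finset.Icc 1 n).erase i)
    (hFn1 : F (n + 1) = Finset.Icc 1 n \ {1, 2})
    (hFn2 : F (n + 2) = Finset.Icc 1 n \ {3, 4})
    (hsub : ∀ i ≤ n + 2, S i ⊆ F i)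
    (hinj : ∀ i ≤ n + 2, ∀ j ≤ n + 2, S i = S j → i = j)
    (hdisj : ∀ i ≤ n + 2, ∀ j ≤ n + 2, i ≠ j →
      Disjoint (Finset.Icc (S i) (F i)) (Finset.Icc (S j) (F j)))
    (habund : ∀ p ∈ Finset.Icc 1 n,
      2 * ((Finset.range (n + 3)).filter fun k => p ∈ S k).card < n + 3)
    (x : ℕ)
    (hxle : ∀ i ≤ n + 2, x ≤ (S i).card)
    (hxeq : ∃ i ≤ n + 2, (S i).card = x) :
    4 * x + 4 ≤ n := by
  classical
  -- key: intervals intersect if mutual containment holds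
  have key : ∀ i ≤ n + 2, ∀ j ≤ n + 2, i ≠ j → S i ⊆ F j → S j ⊆ F i → False := by
    intro i hi j hj hij h1 h2
    have m1 : S i ∪ S j ∈ Finset.Icc (S i) (F i) := by
      rw [Finset.mem_Icc]
      exact ⟨Finset.subset_union_left, Finset.union_subset (hsub i hi) h2⟩
    have m2 : S i ∪ S j ∈ Finset.Icc (S j) (F j) := by
      rw [Finset.mem_Icc]
      exact ⟨Finset.subset_union_right, Finset.union_subset h1 (hsub j hj)⟩
    exact Finset.disjoint_left.mp (hdisj i hi j hj hij) m1 m2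
  rcases Nat.lt_or_ge n 4 with hn4 | hn4
  · -- small cases: n = 0 or n = 2 give contradictions
    exfalso
    interval_cases n
    · -- n = 0
      have h0 : S 0 ⊆ (∅ : Finset ℕ) := by
        have := hsub 0 (by omega); rwa [hF0, show Finset.Icc 1 0 = ∅ by decide] at this
      have h1 : S 1 ⊆ (∅ : Finset ℕ) := by
        have := hsub 1 (by omega)
        rwa [show (1 : ℕ) = 0 + 1 by rfl, hFn1,
          show Finset.Icc 1 0 \ {1, 2} = ∅ by decide] at this
      refine key 0 (by omega) 1 (by omega) (by omega) ?_ ?_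
      · rw [show (1 : ℕ) = 0 + 1 by rfl, hFn1]
        exact h0.trans (by intro a ha; exact absurd ha (by simp))
      · rw [hF0]
        exact h1.trans (by intro a ha; exact absurd ha (by simp))
    · exact absurd hn (by decide)
    · -- n = 2 : indices 0 and 4 have overlapping intervals
      have e4 : Finset.Icc 1 2 \ ({3, 4} : Finset ℕ) = Finset.Icc 1 2 := by decide
      refine key 0 (by omega) 4 (by omega) (by omega) ?_ ?_
      · rw [show (4 : ℕ) = 2 + 2 by rfl, hFn2, e4]
        have := hsub 0 (by omega); rwa [hF0] at this
      · rw [hF0]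
        have := hsub 4 (by omega)
        rw [show (4 : ℕ) = 2 + 2 by rfl, hFn2, e4] at this; exact this
    · exact absurd hn (by decide)
  -- main case : n ≥ 4
  set A : Finset ℕ := Finset.Icc 1 n with hAdef
  have hcardA : A.card = n := by simp [hAdef]
  have hSsubA : ∀ k ≤ n + 2, S k ⊆ A := by
    intro k hk
    have h := hsub k hk
    rcases Nat.eq_zero_or_pos k with rfl | h1
    · rwa [hF0] at h
    rcases Nat.lt_or_ge k (n + 1) with h2 | h2
    · rw [hFi k h1 (by omega)] at h
      exact h.trans (Finset.erase_subset _ _)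
    have : k = n + 1 ∨ k = n + 2 := by omega
    rcases this with rfl | rfl
    · rw [hFn1] at h; exact h.trans (Finset.sdiff_subset)
    · rw [hFn2] at h; exact h.trans (Finset.sdiff_subset)
  -- S 0 = A
  have hS0 : ∀ p ∈ A, p ∈ S 0 := by
    intro p hp
    rw [hAdef, Finset.mem_Icc] at hp
    by_contra hnp
    refine key 0 (by omega) p (by omega) (by omega) ?_ ?_
    · rw [hFi p hp.1 hp.2]
      intro a ha
      have haA : a ∈ A := hSsubA 0 (by omega) ha
      rw [Finset.mem_erase]
      exact ⟨fun h => hnp (h ▸ ha), haA⟩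
    · rw [hF0]
      exact hSsubA p (by omega)
  -- tournament condition
  have hB : ∀ i ∈ A, ∀ j ∈ A, i ≠ j → j ∈ S i ∨ i ∈ S j := by
    intro i hi j hj hij
    by_contra hc
    push_neg at hc
    rw [hAdef, Finset.mem_Icc] at hi hj
    refine key i (by omega) j (by omega) hij ?_ ?_
    · rw [hFi j hj.1 hj.2]
      intro a ha
      rw [Finset.mem_erase]
      exact ⟨fun h => hc.1 (h ▸ ha), hSsubA i (by omega) ha⟩
    · rw [hFi i hi.1 hi.2]
      intro a ha
      rw [Finset.mem_erase]
      exact ⟨fun h => hc.2 (h ▸ ha), hSsubA j (by omega) ha⟩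
  -- extra edges from F (n+1), F (n+2)
  have hE : ∀ a b : ℕ, 1 ≤ a → a ≤ n → 1 ≤ b → b ≤ n → a ≠ b →
      (F (n+1) = Finset.Icc 1 n \ {a, b}) → b ∈ S a := by
    intro a b ha1 ha2 hb1 hb2 hab hFab
    by_contra hbs
    refine key a (by omega) (n+1) (by omega) (by omega) ?_ ?_
    · rw [hFab]
      intro p hp
      have hpF : p ∈ (Finset.Icc 1 n).erase a := by
        have := hsub a (by omega); rw [hFi a ha1 ha2] at this; exact this hp
      rw [Finset.mem_erase] at hpF
      rw [Finset.mem_sdiff]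
      refine ⟨hpF.2, ?_⟩
      simp only [Finset.mem_insert, Finset.mem_singleton]
      push_neg
      exact ⟨hpF.1, fun h => hbs (h ▸ hp)⟩
    · rw [hFi a ha1 ha2]
      intro p hp
      have hpF : p ∈ Finset.Icc 1 n \ ({a, b} : Finset ℕ) := by
        have := hsub (n+1) (by omega); rw [hFab] at this; exact this hp
      rw [Finset.mem_sdiff] at hpF
      rw [Finset.mem_erase]
      refine ⟨fun h => hpF.2 ?_, hpF.1⟩
      simp [h]
  have hE12 : 2 ∈ S 1 := hE 1 2 (by omega) (by omega) (by omega) (by omega) (by omega) hFn1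
  have hE21 : 1 ∈ S 2 := hE 2 1 (by omega) (by omega) (by omega) (by omega) (by omega)
    (by rw [hFn1]; congr 1; ext p; simp; tauto)
  have hE' : ∀ a b : ℕ, 1 ≤ a → a ≤ n → 1 ≤ b → b ≤ n → a ≠ b →
      (F (n+2) = Finset.Icc 1 n \ {a, b}) → b ∈ S a := by
    intro a b ha1 ha2 hb1 hb2 hab hFab
    by_contra hbs
    refine key a (by omega) (n+2) (by omega) (by omega) ?_ ?_
    · rw [hFab]
      intro p hp
      have hpF : p ∈ (Finset.Icc 1 n).erase a := by
        have := hsub a (by omega); rw [hFi a ha1 ha2] at this; exact this hp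
      rw [Finset.mem_erase] at hpF
      rw [Finset.mem_sdiff]
      refine ⟨hpF.2, ?_⟩
      simp only [Finset.mem_insert, Finset.mem_singleton]
      push_neg
      exact ⟨hpF.1, fun h => hbs (h ▸ hp)⟩
    · rw [hFi a ha1 ha2]
      intro p hp
      have hpF : p ∈ Finset.Icc 1 n \ ({a, b} : Finset ℕ) := by
        have := hsub (n+2) (by omega); rw [hFab] at this; exact this hp
      rw [Finset.mem_sdiff] at hpF
      rw [Finset.mem_erase]
      refine ⟨fun h => hpF.2 ?_, hpF.1⟩
      simp [h]
  have hE34 : 4 ∈ S 3 := hE' 3 4 (by omega) (by omega) (by omega) (by omega) (by omega) hFn2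
  have hE43 : 3 ∈ S 4 := hE' 4 3 (by omega) (by omega) (by omega) (by omega) (by omega)
    (by rw [hFn2]; congr 1; ext p; simp; tauto)
  -- double counting lemma
  have hdc : ∀ (J : Finset ℕ), (∀ k ∈ J, S k ⊆ A) →
      ∑ k ∈ J, (S k).card = ∑ p ∈ A, (J.filter fun k => p ∈ S k).card := by
    intro J hJ
    have h1 : ∀ k ∈ J, (S k).card = (A.filter fun p => p ∈ S k).card := by
      intro k hk
      congr 1
      rw [Finset.filter_mem_eq_inter, Finset.inter_eq_right.mpr (hJ k hk)]
    rw [Finset.sum_congr rfl h1]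
    simp_rw [Finset.card_filter]
    exact Finset.sum_comm
  -- lower bound on the sum over A
  have hAsub : ∀ k ∈ A, S k ⊆ A := by
    intro k hk
    rw [hAdef, Finset.mem_Icc] at hk
    exact hSsubA k (by omega)
  have hmemA : ∀ k : ℕ, 1 ≤ k → k ≤ n → k ∈ A := by
    intro k h1 h2; rw [hAdef, Finset.mem_Icc]; exact ⟨h1, h2⟩
  have hRlow : ∀ k ∈ A, n - 1 + (if k ∈ ({1,2,3,4} : Finset ℕ) then 1 else 0)
      ≤ (S k).card + (A.filter fun j => k ∈ S j).card := by
    intro k hk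
    rw [← Finset.card_union_add_card_inter]
    have hu : n - 1 ≤ (S k ∪ A.filter fun j => k ∈ S j).card := by
      have hsub2 : A.erase k ⊆ S k ∪ A.filter fun j => k ∈ S j := by
        intro j hj
        rw [Finset.mem_erase] at hj
        rcases hB k hk j hj.2 (fun h => hj.1 h.symm) with h | h
        · exact Finset.mem_union_left _ h
        · exact Finset.mem_union_right _ (Finset.mem_filter.mpr ⟨hj.2, h⟩)
      calc n - 1 = (A.erase k).card := by rw [Finset.card_erase_of_mem hk, hcardA]
        _ ≤ _ := Finset.card_le_card hsub2
    have hi : (if k ∈ ({1,2,3,4} : Finset ℕ) then 1 else 0)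
        ≤ (S k ∩ A.filter fun j => k ∈ S j).card := by
      split_ifs with hk4
      · have : ∃ m, m ∈ S k ∩ A.filter fun j => k ∈ S j := by
          simp only [Finset.mem_insert, Finset.mem_singleton] at hk4
          rcases hk4 with rfl | rfl | rfl | rfl
          · exact ⟨2, Finset.mem_inter.mpr ⟨hE12,
              Finset.mem_filter.mpr ⟨hmemA 2 (by omega) (by omega), hE21⟩⟩⟩
          · exact ⟨1, Finset.mem_inter.mpr ⟨hE21,
              Finset.mem_filter.mpr ⟨hmemA 1 (by omega) (by omega), hE12⟩⟩⟩
          · exact ⟨4, Finset.mem_inter.mpr ⟨hE34,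
              Finset.mem_filter.mpr ⟨hmemA 4 (by omega) (by omega), hE43⟩⟩⟩
          · exact ⟨3, Finset.mem_inter.mpr ⟨hE43,
              Finset.mem_filter.mpr ⟨hmemA 3 (by omega) (by omega), hE34⟩⟩⟩
        obtain ⟨m, hm⟩ := this
        exact Finset.card_pos.mpr ⟨m, hm⟩
      · exact Nat.zero_le _
    omega
  have hsum1 : n * (n - 1) + 4 ≤ 2 * ∑ k ∈ A, (S k).card := by
    have h := Finset.sum_le_sum hRlow
    rw [Finset.sum_add_distrib] at h
    have hRA : ∑ k ∈ A, (A.filter fun j => k ∈ S j).card = ∑ k ∈ A, (S k).card := by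
      rw [hdc A hAsub]
    have hco : (∑ k ∈ A, (n - 1)) = n * (n - 1) := by
      rw [Finset.sum_const, hcardA, smul_eq_mul]
    have hite : (∑ k ∈ A, if k ∈ ({1,2,3,4} : Finset ℕ) then 1 else 0) = 4 := by
      rw [Finset.sum_ite_mem]
      have : A ∩ ({1,2,3,4} : Finset ℕ) = ({1,2,3,4} : Finset ℕ) := by
        apply Finset.inter_eq_right.mpr
        intro p hp
        simp only [Finset.mem_insert, Finset.mem_singleton] at hp
        rw [hAdef, Finset.mem_Icc]; omega
      rw [this]
      decide
    rw [Finset.sum_add_distrib, hco, hite, hRA] at h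
    omega
  -- upper bound over all indices
  set I : Finset ℕ := Finset.Icc 1 (n + 2) with hIdef
  have hIsub : ∀ k ∈ I, S k ⊆ A := by
    intro k hk; rw [hIdef, Finset.mem_Icc] at hk; exact hSsubA k hk.2
  have hup : 2 * ∑ k ∈ I, (S k).card ≤ n * n := by
    rw [hdc I hIsub, Finset.mul_sum]
    calc ∑ p ∈ A, 2 * (I.filter fun k => p ∈ S k).card ≤ ∑ p ∈ A, n := by
          apply Finset.sum_le_sum
          intro p hp
          have hab := habund p (by rwa [hAdef] at hp)
          have hr : Finset.range (n + 3) = insert 0 I := by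
            ext k; simp only [Finset.mem_range, Finset.mem_insert, hIdef, Finset.mem_Icc]; omega
          rw [hr, Finset.filter_insert, if_pos (hS0 p hp)] at hab
          have h0 : (0 : ℕ) ∉ I.filter fun k => p ∈ S k := by
            intro h; rw [Finset.mem_filter, hIdef, Finset.mem_Icc] at h; omega
          rw [Finset.card_insert_of_notMem h0] at hab
          omega
      _ = n * n := by rw [Finset.sum_const, hcardA, smul_eq_mul]
  have hsplit : ∑ k ∈ I, (S k).card
      = (∑ k ∈ A, (S k).card) + (S (n + 1)).card + (S (n + 2)).card := by
    rw [hIdef, show n + 2 = (n + 1) + 1 by rfl,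
      Finset.sum_Icc_succ_top (by omega : 1 ≤ (n + 1) + 1),
      Finset.sum_Icc_succ_top (by omega : 1 ≤ n + 1)]
  have hx1 : x ≤ (S (n + 1)).card := hxle (n + 1) (by omega)
  have hx2 : x ≤ (S (n + 2)).card := hxle (n + 2) (by omega)
  have hnn : n * n = n * (n - 1) + n := by
    obtain ⟨m, rfl⟩ : ∃ m, n = m + 1 := ⟨n - 1, by omega⟩
    simp [Nat.add_sub_cancel]; ring
  linarith
end

section
/- Let n be even with n = 4x + 4 for some x ≥ 1, and suppose S = {S_0, ..., S_{n+2}} satisfies Reimer's conditions with the filter F_0 = [n], F_i = [n]\{i} (1 ≤ i ≤ n), F_{n+1} = [n]\{1,2}, F_{n+2} = [n]\{3,4}, fails the abundance condition, and has minimum set size exactly x. Then every element of [n] belongs to exactly n/2 + 1 of the sets in S. -/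
/-- With `n = 4x + 4` (`x ≥ 1`), `S 0, …, S (n+2)` satisfying Reimer's conditions
with the filter `F 0 = [n]`, `F i = [n] \ {i}` (`1 ≤ i ≤ n`), `F (n+1) = [n] \ {1,2}`,
`F (n+2) = [n] \ {3,4}`, failing abundance (every element in at most `n/2 + 1` of the `n+3`
sets) and having minimum set size exactly `x`: every element of `[n]` belongs to exactly
`n/2 + 1` of the sets. -/
theorem stmt_8 (n x : ℕ) (hx : 1 ≤ x) (hnx : n = 4 * x + 4) (S F : ℕ → Finset ℕ)
    (hF0 : F 0 = Finset.Icc 1 n)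
    (hFi : ∀ i, 1 ≤ i → i ≤ n → F i = (Finset.Icc 1 n).erase i)
    (hFn1 : F (n + 1) = Finset.Icc 1 n \ {1, 2})
    (hFn2 : F (n + 2) = Finset.Icc 1 n \ {3, 4})
    (hsub : ∀ i ≤ n + 2, S i ⊆ F i)
    (hinj : ∀ i ≤ n + 2, ∀ j ≤ n + 2, S i = S j → i = j)
    (hdisj : ∀ i ≤ n + 2, ∀ j ≤ n + 2, i ≠ j →
      Disjoint (Finset.Icc (S i) (F i)) (Finset.Icc (S j) (F j)))
    (habund : ∀ p ∈ Finset.Icc 1 n,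
      ((Finset.range (n + 3)).filter fun k => p ∈ S k).card ≤ n / 2 + 1)
    (hxle : ∀ i ≤ n + 2, x ≤ (S i).card)
    (hxeq : ∃ i ≤ n + 2, (S i).card = x) :
    ∀ p ∈ Finset.Icc 1 n,
      ((Finset.range (n + 3)).filter fun k => p ∈ S k).card = n / 2 + 1 := by
  have hn8 : 8 ≤ n := by omega
  set I := Finset.Icc 1 n with hI
  have hIcard : I.card = n := by simp [hI]
  -- every S k lies inside [n]
  have hSsub : ∀ k ≤ n + 2, S k ⊆ I := by
    intro k hk
    refine (hsub k hk).trans ?_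
    rcases Nat.lt_or_ge k 1 with h | h
    · have : k = 0 := by omega
      subst this; rw [hF0]
    · rcases Nat.lt_or_ge n k with h2 | h2
      · have : k = n + 1 ∨ k = n + 2 := by omega
        rcases this with rfl | rfl
        · rw [hFn1]; exact Finset.sdiff_subset
        · rw [hFn2]; exact Finset.sdiff_subset
      · rw [hFi k h h2]; exact Finset.erase_subset _ _
  -- key consequence of disjointness
  have key : ∀ i ≤ n + 2, ∀ j ≤ n + 2, i ≠ j → ¬ S j ⊆ F i ∨ ¬ S i ⊆ F j := by
    intro i hi j hj hij
    by_contra h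
    push_neg at h
    have hd := hdisj i hi j hj hij
    have h1 : S i ∪ S j ∈ Finset.Icc (S i) (F i) :=
      Finset.mem_Icc.2 ⟨Finset.subset_union_left, Finset.union_subset (hsub i hi) h.1⟩
    have h2 : S i ∪ S j ∈ Finset.Icc (S j) (F j) :=
      Finset.mem_Icc.2 ⟨Finset.subset_union_right, Finset.union_subset h.2 (hsub j hj)⟩
    exact Finset.disjoint_left.1 hd h1 h2
  -- S 0 = [n]
  have f0 : ∀ j, 1 ≤ j → j ≤ n → j ∈ S 0 := by
    intro j h1 hjn
    rcases key 0 (by omega) j (by omega) (by omega) with h | h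
    · exact absurd (by rw [hF0]; exact hSsub j (by omega)) h
    · rw [hFi j h1 hjn] at h
      obtain ⟨a, ha, hna⟩ := Finset.not_subset.1 h
      have haI : a ∈ I := hSsub 0 (by omega) ha
      have : a = j := by
        by_contra hne
        exact hna (Finset.mem_erase.2 ⟨hne, haI⟩)
      rwa [this] at ha
  have hS0 : S 0 = I := by
    apply Finset.Subset.antisymm (hSsub 0 (by omega))
    intro j hj
    rw [hI, Finset.mem_Icc] at hj
    exact f0 j hj.1 hj.2
  -- pair condition for 1 ≤ i, j ≤ n
  have f2 : ∀ i j, 1 ≤ i → i ≤ n → 1 ≤ j → j ≤ n → i ≠ j → j ∈ S i ∨ i ∈ S j := by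
    intro i j hi1 hin hj1 hjn hij
    rcases key i (by omega) j (by omega) hij with h | h
    · rw [hFi i hi1 hin] at h
      obtain ⟨a, ha, hna⟩ := Finset.not_subset.1 h
      have haI : a ∈ I := hSsub j (by omega) ha
      have : a = i := by
        by_contra hne
        exact hna (Finset.mem_erase.2 ⟨hne, haI⟩)
      right; rwa [this] at ha
    · rw [hFi j hj1 hjn] at h
      obtain ⟨a, ha, hna⟩ := Finset.not_subset.1 h
      have haI : a ∈ I := hSsub i (by omega) ha
      have : a = j := by
        by_contra hne
        exact hna (Finset.mem_erase.2 ⟨hne, haI⟩)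
      left; rwa [this] at ha
  -- the special double pairs, via cubes n+1 and n+2
  have hSn1sub : S (n+1) ⊆ I \ ({1, 2} : Finset ℕ) := by
    have := hsub (n+1) (by omega); rwa [hFn1] at this
  have hSn2sub : S (n+2) ⊆ I \ ({3, 4} : Finset ℕ) := by
    have := hsub (n+2) (by omega); rwa [hFn2] at this
  -- 2 ∈ S 1 (from cube n+1 vs cube 1), 1 ∈ S 2, 4 ∈ S 3, 3 ∈ S 4
  have pairlem : ∀ m u v : ℕ, m = n + 1 ∨ m = n + 2 → 1 ≤ u → u ≤ n → 1 ≤ v → v ≤ n →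
      u ≠ v → F m = I \ ({u, v} : Finset ℕ) → v ∈ S u := by
    intro m u v hm hu1 hun hv1 hvn huv hFm
    have hmle : m ≤ n + 2 := by omega
    have hSm : S m ⊆ I \ ({u, v} : Finset ℕ) := by
      have := hsub m hmle; rwa [hFm] at this
    rcases key u (by omega) m hmle (by omega) with h | h
    · -- ¬ S m ⊆ F u = erase u I : impossible since S m avoids u
      exfalso
      rw [hFi u hu1 hun] at h
      refine h (fun a ha => ?_)
      have := hSm ha
      rw [Finset.mem_sdiff] at this
      refine Finset.mem_erase.2 ⟨?_, this.1⟩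
      intro hau
      exact this.2 (by simp [hau])
    · -- ¬ S u ⊆ I \ {u,v} : the offending element must be v
      rw [hFm] at h
      obtain ⟨a, ha, hna⟩ := Finset.not_subset.1 h
      have haI : a ∈ I := hSsub u (by omega) ha
      have hauv : a = u ∨ a = v := by
        by_contra hc
        push_neg at hc
        exact hna (Finset.mem_sdiff.2 ⟨haI, by simp [hc.1, hc.2]⟩)
      have hau : a ≠ u := by
        intro rfl'
        have := hsub u (by omega) ha
        rw [hFi u hu1 hun, rfl'] at this
        exact (Finset.mem_erase.1 this).1 rfl
      rcases hauv with h' | h'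
      · exact absurd h' hau
      · rwa [h'] at ha
  have h21 : 2 ∈ S 1 := pairlem (n+1) 1 2 (Or.inl rfl) (by omega) (by omega) (by omega) (by omega) (by omega) hFn1
  have h12 : 1 ∈ S 2 := by
    refine pairlem (n+1) 2 1 (Or.inl rfl) (by omega) (by omega) (by omega) (by omega) (by omega) ?_
    rw [hFn1]
    congr 1
    ext a; simp; tauto
  have h43 : 4 ∈ S 3 := pairlem (n+2) 3 4 (Or.inr rfl) (by omega) (by omega) (by omega) (by omega) (by omega) hFn2
  have h34 : 3 ∈ S 4 := by
    refine pairlem (n+2) 4 3 (Or.inr rfl) (by omega) (by omega) (by omega) (by omega) (by omega) ?_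
    rw [hFn2]
    congr 1
    ext a; simp; tauto
  -- the double count of ordered pairs
  set P : Finset (ℕ × ℕ) := (I ×ˢ I).filter (fun q => q.2 ∈ S q.1) with hP
  have hPcard : P.card = ∑ i ∈ I, (S i).card := by
    have hPb : P = I.biUnion (fun i => {i} ×ˢ S i) := by
      ext ⟨a, b⟩
      simp only [hP, Finset.mem_filter, Finset.mem_product, Finset.mem_biUnion,
        Finset.mem_singleton]
      constructor
      · rintro ⟨⟨ha, hb⟩, hbs⟩
        exact ⟨a, ha, rfl, hbs⟩
      · rintro ⟨i, hi, hai, hbs⟩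
        subst hai
        have hin : a ≤ n + 2 := by
          rw [hI, Finset.mem_Icc] at hi; omega
        exact ⟨⟨hi, hSsub a hin hbs⟩, hbs⟩
    rw [hPb, Finset.card_biUnion]
    · refine Finset.sum_congr rfl fun i _ => ?_
      simp [Finset.card_product]
    · intro i _ j _ hij
      simp only [Finset.disjoint_left, Finset.mem_product, Finset.mem_singleton]
      rintro ⟨a, b⟩ ⟨rfl, _⟩ ⟨h, _⟩
      exact hij h
  set Q : Finset (ℕ × ℕ) := P.image Prod.swap with hQ
  have hQcard : Q.card = P.card := Finset.card_image_of_injective _ Prod.swap_injective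
  have hunion : I.offDiag ⊆ P ∪ Q := by
    rintro ⟨a, b⟩ hab
    rw [Finset.mem_offDiag] at hab
    obtain ⟨ha, hb, hne⟩ := hab
    have ha' : 1 ≤ a ∧ a ≤ n := by rwa [hI, Finset.mem_Icc] at ha
    have hb' : 1 ≤ b ∧ b ≤ n := by rwa [hI, Finset.mem_Icc] at hb
    rcases f2 a b ha'.1 ha'.2 hb'.1 hb'.2 hne with h | h
    · exact Finset.mem_union_left _ (Finset.mem_filter.2 ⟨Finset.mem_product.2 ⟨ha, hb⟩, h⟩)
    · refine Finset.mem_union_right _ (Finset.mem_image.2 ⟨(b, a), ?_, rfl⟩)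
      exact Finset.mem_filter.2 ⟨Finset.mem_product.2 ⟨hb, ha⟩, h⟩
  have hmemI : ∀ a : ℕ, 1 ≤ a → a ≤ n → a ∈ I := by
    intro a h1 h2; rw [hI, Finset.mem_Icc]; exact ⟨h1, h2⟩
  have hinter : ({(1, 2), (2, 1), (3, 4), (4, 3)} : Finset (ℕ × ℕ)) ⊆ P ∩ Q := by
    have memP : ∀ a b : ℕ, 1 ≤ a → a ≤ n → 1 ≤ b → b ≤ n → b ∈ S a → (a, b) ∈ P := by
      intro a b h1 h2 h3 h4 h5
      exact Finset.mem_filter.2 ⟨Finset.mem_product.2 ⟨hmemI a h1 h2, hmemI b h3 h4⟩, h5⟩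
    have memQ : ∀ a b : ℕ, (b, a) ∈ P → (a, b) ∈ Q :=
      fun a b h => Finset.mem_image.2 ⟨(b, a), h, rfl⟩
    intro q hq
    simp only [Finset.mem_insert, Finset.mem_singleton] at hq
    rcases hq with rfl | rfl | rfl | rfl
    · exact Finset.mem_inter.2 ⟨memP 1 2 (by omega) (by omega) (by omega) (by omega) h21,
        memQ 1 2 (memP 2 1 (by omega) (by omega) (by omega) (by omega) h12)⟩
    · exact Finset.mem_inter.2 ⟨memP 2 1 (by omega) (by omega) (by omega) (by omega) h12,
        memQ 2 1 (memP 1 2 (by omega) (by omega) (by omega) (by omega) h21)⟩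
    · exact Finset.mem_inter.2 ⟨memP 3 4 (by omega) (by omega) (by omega) (by omega) h43,
        memQ 3 4 (memP 4 3 (by omega) (by omega) (by omega) (by omega) h34)⟩
    · exact Finset.mem_inter.2 ⟨memP 4 3 (by omega) (by omega) (by omega) (by omega) h34,
        memQ 4 3 (memP 3 4 (by omega) (by omega) (by omega) (by omega) h43)⟩
  have hA2 : n * n - n + 4 ≤ 2 * P.card := by
    have h1 : (P ∪ Q).card + (P ∩ Q).card = P.card + Q.card :=
      Finset.card_union_add_card_inter P Q
    have h2 : n * n - n ≤ (P ∪ Q).card := by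
      have := Finset.card_le_card hunion
      rwa [Finset.offDiag_card, hIcard] at this
    have h3 : 4 ≤ (P ∩ Q).card := by
      have := Finset.card_le_card hinter
      have h4 : ({(1, 2), (2, 1), (3, 4), (4, 3)} : Finset (ℕ × ℕ)).card = 4 := by decide
      omega
    omega
  -- sum over all indices
  have hsplit : ∑ k ∈ Finset.range (n + 3), (S k).card
      = (S 0).card + (∑ i ∈ I, (S i).card) + (S (n+1)).card + (S (n+2)).card := by
    rw [show n + 3 = (n + 2) + 1 from rfl, Finset.sum_range_succ,
      show n + 2 = (n + 1) + 1 from rfl, Finset.sum_range_succ, Finset.sum_range_succ']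
    have : ∑ i ∈ I, (S i).card = ∑ i ∈ Finset.range n, (S (i + 1)).card := by
      rw [hI, ← Finset.Ico_add_one_right_eq_Icc, Finset.sum_Ico_eq_sum_range]
      simp [Nat.add_comm]
    rw [this]; ring
  -- double counting
  have hdouble : ∑ p ∈ I, ((Finset.range (n + 3)).filter fun k => p ∈ S k).card
      = ∑ k ∈ Finset.range (n + 3), (S k).card := by
    simp only [Finset.card_filter]
    rw [Finset.sum_comm]
    refine Finset.sum_congr rfl fun k hk => ?_
    have hk2 : k ≤ n + 2 := by
      rw [Finset.mem_range] at hk; omega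
    rw [← Finset.card_filter, Finset.filter_mem_eq_inter,
      Finset.inter_eq_right.2 (hSsub k hk2)]
  -- the total lower bound
  have hlow : n * (n / 2 + 1) ≤ ∑ p ∈ I, ((Finset.range (n + 3)).filter fun k => p ∈ S k).card := by
    rw [hdouble, hsplit, hS0, hIcard, ← hPcard]
    have hs1 : x ≤ (S (n+1)).card := hxle (n+1) (by omega)
    have hs2 : x ≤ (S (n+2)).card := hxle (n+2) (by omega)
    obtain ⟨y, hy⟩ : ∃ y, x * x = y := ⟨_, rfl⟩
    have e1 : n * n = 16 * y + 32 * x + 16 := by rw [hnx, ← hy]; ring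
    have e2 : n * (n / 2 + 1) = 8 * y + 20 * x + 12 := by
      have h : n / 2 + 1 = 2 * x + 3 := by omega
      rw [h, hnx, ← hy]; ring
    rw [e1] at hA2
    rw [e2]
    omega
  -- conclude equality
  intro p hp
  by_contra hne
  have hlt : ((Finset.range (n + 3)).filter fun k => p ∈ S k).card < n / 2 + 1 :=
    lt_of_le_of_ne (habund p hp) hne
  have hsl : ∑ q ∈ I, ((Finset.range (n + 3)).filter fun k => q ∈ S k).card
      < ∑ _q ∈ I, (n / 2 + 1) :=
    Finset.sum_lt_sum (fun q hq => habund q hq) ⟨p, hp, hlt⟩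
  rw [Finset.sum_const, hIcard, smul_eq_mul] at hsl
  exact absurd hsl (not_lt.2 hlow)
end

section
/- For n divisible by 4 with n ≥ 20, let S_{k_1} = {1, 4} ∪ {k_1 + 1, ..., n/2 + k_1 - 2} for 5 ≤ k_1 ≤ n/4 + 2 (intervals of consecutive integers). Then the union-closure of the family {S_{k_1} : 5 ≤ k_1 ≤ n/4 + 2} equals {{1,4} ∪ {a, a+1, ..., b} : 6 ≤ a ≤ n/4 + 3, n/2 + 3 ≤ b ≤ 3n/4, b - a ≥ n/2 - 3}. -/
def unionClosure (S : Set (Finset ℕ)) : Set (Finset ℕ) :=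
  {A | ∃ T : Finset (Finset ℕ), ↑T ⊆ S ∧ T.Nonempty ∧ A = T.sup id}

lemma aux12 (m : ℕ) (hm : 5 ≤ m) (T : Finset (Finset ℕ))
    (hT : ↑T ⊆ {A : Finset ℕ | ∃ k, 5 ≤ k ∧ k ≤ m + 2 ∧
      A = {1, 4} ∪ Finset.Icc (k + 1) (2 * m + k - 2)}) (hne : T.Nonempty) :
    ∃ k1 k2, 5 ≤ k1 ∧ k1 ≤ k2 ∧ k2 ≤ m + 2 ∧
      T.sup id = {1, 4} ∪ Finset.Icc (k1 + 1) (2 * m + k2 - 2) := by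
  classical
  induction T using Finset.induction_on with
  | empty => exact absurd hne (by simp)
  | @insert A s hA ih =>
    have hAmem : A ∈ {A : Finset ℕ | ∃ k, 5 ≤ k ∧ k ≤ m + 2 ∧
        A = {1, 4} ∪ Finset.Icc (k + 1) (2 * m + k - 2)} := hT (by simp)
    obtain ⟨k, hk5, hk2, rfl⟩ := hAmem
    by_cases hs : s.Nonempty
    · obtain ⟨k1, k2, h1, h12, h2, hsup⟩ := ih (fun x hx => hT (by simp [hx])) hs
      refine ⟨min k k1, max k k2, by omega, by omega, by omega, ?_⟩
      rw [Finset.sup_insert, hsup]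
      ext x
      simp only [id, Finset.mem_union, Finset.sup_eq_union, Finset.mem_insert,
        Finset.mem_singleton, Finset.mem_Icc]
      omega
    · rw [Finset.not_nonempty_iff_eq_empty] at hs
      subst hs
      exact ⟨k, k, hk5, le_refl k, hk2, by simp⟩

/-- For `4 ∣ n`, `n ≥ 20`, the union-closure of
`{S_{k₁} = {1,4} ∪ {k₁+1, …, n/2+k₁-2} : 5 ≤ k₁ ≤ n/4+2}` equals
`{{1,4} ∪ {a,…,b} : 6 ≤ a ≤ n/4+3, n/2+3 ≤ b ≤ 3n/4, b - a ≥ n/2 - 3}`. -/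
theorem stmt_12 (n : ℕ) (hn4 : 4 ∣ n) (hn : 20 ≤ n) :
    unionClosure
        {A | ∃ k, 5 ≤ k ∧ k ≤ n / 4 + 2 ∧
          A = {1, 4} ∪ Finset.Icc (k + 1) (n / 2 + k - 2)} =
      {A | ∃ a b, 6 ≤ a ∧ a ≤ n / 4 + 3 ∧ n / 2 + 3 ≤ b ∧ b ≤ 3 * n / 4 ∧
        n / 2 - 3 ≤ b - a ∧ A = {1, 4} ∪ Finset.Icc a b} := by
  obtain ⟨m, rfl⟩ := hn4
  have hm : 5 ≤ m := by omega
  have h4 : 4 * m / 4 = m := by omega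
  have h2 : 4 * m / 2 = 2 * m := by omega
  have h34 : 3 * (4 * m) / 4 = 3 * m := by omega
  rw [h4, h2, h34]
  ext A
  simp only [unionClosure, Set.mem_setOf_eq]
  constructor
  · rintro ⟨T, hT, hne, rfl⟩
    obtain ⟨k1, k2, h1, h12, h2', hsup⟩ := aux12 m hm T hT hne
    exact ⟨k1 + 1, 2 * m + k2 - 2, by omega, by omega, by omega, by omega, by omega, hsup⟩
  · rintro ⟨a, b, ha6, ham, hb1, hb2, hab, rfl⟩
    refine ⟨{({1, 4} : Finset ℕ) ∪ Finset.Icc a (2 * m + a - 3),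
      ({1, 4} : Finset ℕ) ∪ Finset.Icc (b - 2 * m + 3) b}, ?_, by simp, ?_⟩
    · intro X hX
      simp only [Finset.coe_insert, Finset.coe_singleton, Set.mem_insert_iff,
        Set.mem_singleton_iff] at hX
      rcases hX with rfl | rfl
      · exact ⟨a - 1, by omega, by omega, by rw [show a - 1 + 1 = a by omega,
          show 2 * m + (a - 1) - 2 = 2 * m + a - 3 by omega]⟩
      · exact ⟨b - 2 * m + 2, by omega, by omega, by rw [show b - 2 * m + 2 + 1 = b - 2 * m + 3 by omega,
          show 2 * m + (b - 2 * m + 2) - 2 = b by omega]⟩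
    · rw [Finset.sup_insert, Finset.sup_singleton]
      ext x
      simp only [id, Finset.mem_union, Finset.sup_eq_union, Finset.mem_insert,
        Finset.mem_singleton, Finset.mem_Icc]
      omega
end

section
/- For n divisible by 4 with n ≥ 20, the family {S_{k_1} : 5 ≤ k_1 ≤ n/4 + 2} with S_{k_1} = {1,4} ∪ {k_1+1, ..., n/2+k_1-2} has union-closure of size at least c·n² for some constant c > 0 (in fact the closure has size Ω(n²)). -/
open Finset

theorem Set.Finite.unionClosure {S : Set (Finset ℕ)} (hS : S.Finite) :
    (unionClosure S).Finite := by
  refine ((hS.toFinset.powerset : Set (Finset (Finset ℕ))).toFinite.image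
    fun T => T.sup id).subset ?_
  rintro _ ⟨T, hTS, -, rfl⟩
  exact ⟨T, by simpa [Set.subset_def] using hTS, rfl⟩

theorem union_mem_unionClosure {S : Set (Finset ℕ)} {A B : Finset ℕ} (hA : A ∈ S) (hB : B ∈ S) :
    A ∪ B ∈ unionClosure S := by
  classical
  refine ⟨{A, B}, ?_, insert_nonempty _ _, by simp⟩
  simp [Set.insert_subset_iff, hA, hB]

theorem Finset.card_sq_le_two_mul_card_filter_le {α : Type*} [LinearOrder α] (s : Finset α) :
    #s ^ 2 ≤ 2 * #{p ∈ s ×ˢ s | p.1 ≤ p.2} := by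
  have hswap : #{p ∈ s ×ˢ s | ¬p.1 ≤ p.2} ≤ #{p ∈ s ×ˢ s | p.1 ≤ p.2} := by
    refine card_le_card_of_injOn Prod.swap (fun p hp => ?_) Prod.swap_injective.injOn
    simp only [coe_filter, mem_product, Set.mem_ofPred_eq] at hp ⊢
    exact ⟨hp.1.symm, (not_le.mp hp.2).le⟩
  have hsplit := card_filter_add_card_filter_not (s := s ×ˢ s) fun p => p.1 ≤ p.2
  rw [card_product] at hsplit
  nlinarith

theorem eq_and_eq_of_union_Icc_eq {C : Finset ℕ} {a b a' b' : ℕ} (hC : ∀ x ∈ C, x < a)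
    (hC' : ∀ x ∈ C, x < a') (hab : a ≤ b) (hab' : a' ≤ b')
    (h : C ∪ Icc a b = C ∪ Icc a' b') : a = a' ∧ b = b' := by
  have mem_iff (x : ℕ) (hx : x ∉ C) : x ∈ Icc a b ↔ x ∈ Icc a' b' := by
    simpa [hx] using congrArg (x ∈ ·) h
  have ha := mem_iff a fun h => (hC a h).false
  have ha' := mem_iff a' fun h => (hC' a' h).false
  have hb := mem_iff b fun h => (hC b h).not_ge hab
  have hb' := mem_iff b' fun h => (hC' b' h).not_ge hab'
  simp only [mem_Icc] at ha ha' hb hb'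
  omega

def intervalFamily (m K : ℕ) : Set (Finset ℕ) :=
  {A | ∃ k, 5 ≤ k ∧ k ≤ K ∧ A = {1, 4} ∪ Icc (k + 1) (m + k - 2)}

theorem intervalFamily_finite (m K : ℕ) : (intervalFamily m K).Finite := by
  refine ((Set.finite_Icc 5 K).image fun k => {1, 4} ∪ Icc (k + 1) (m + k - 2)).subset ?_
  rintro _ ⟨k, hk5, hkK, rfl⟩
  exact ⟨k, ⟨hk5, hkK⟩, rfl⟩

theorem union_Icc_union_Icc_eq {a b m : ℕ} (hab : a ≤ b) (hba : b ≤ a + m - 2) :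
    ({1, 4} ∪ Icc (a + 1) (m + a - 2)) ∪ ({1, 4} ∪ Icc (b + 1) (m + b - 2)) =
      {1, 4} ∪ Icc (a + 1) (m + b - 2) := by
  ext x
  simp only [mem_union, mem_insert, mem_singleton, mem_Icc]
  omega

theorem sq_le_two_mul_ncard_unionClosure_intervalFamily {m K : ℕ} (hm : 3 ≤ m)
    (hK : K ≤ m + 3) :
    (K - 4) ^ 2 ≤ 2 * (unionClosure (intervalFamily m K)).ncard := by
  set P := {p ∈ Icc 5 K ×ˢ Icc 5 K | p.1 ≤ p.2}
  set f : ℕ × ℕ → Finset ℕ := fun p => {1, 4} ∪ Icc (p.1 + 1) (m + p.2 - 2)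
  have hP {p : ℕ × ℕ} (hp : p ∈ (P : Set (ℕ × ℕ))) : 5 ≤ p.1 ∧ p.1 ≤ p.2 ∧ p.2 ≤ K := by
    simp only [P, coe_filter, mem_product, mem_Icc, Set.mem_ofPred_eq] at hp
    omega
  have hmaps (p : ℕ × ℕ) (hp : p ∈ (P : Set (ℕ × ℕ))) : f p ∈ unionClosure (intervalFamily m K) := by
    obtain ⟨h5, hle, hK'⟩ := hP hp
    rw [show f p = _ from (union_Icc_union_Icc_eq (m := m) hle (by omega)).symm]
    exact union_mem_unionClosure ⟨p.1, h5, by omega, rfl⟩ ⟨p.2, by omega, hK', rfl⟩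
  have hinj : Set.InjOn f P := fun p hp p' hp' hpp' => by
    obtain ⟨h5, hle, -⟩ := hP hp
    obtain ⟨h5', hle', -⟩ := hP hp'
    have hC (c : ℕ) (hc : 5 ≤ c) : ∀ x ∈ ({1, 4} : Finset ℕ), x < c + 1 := by
      simp only [mem_insert, mem_singleton]; omega
    obtain ⟨h1, h2⟩ := eq_and_eq_of_union_Icc_eq (hC _ h5) (hC _ h5')
      (by omega) (by omega) hpp'
    exact Prod.ext (by omega) (by omega)
  calc (K - 4) ^ 2 = #(Icc 5 K) ^ 2 := by rw [Nat.card_Icc, show K + 1 - 5 = K - 4 by omega]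
    _ ≤ 2 * #P := card_sq_le_two_mul_card_filter_le _
    _ = 2 * (P : Set (ℕ × ℕ)).ncard := by rw [Set.ncard_coe_finset]
    _ ≤ 2 * (unionClosure (intervalFamily m K)).ncard := by
      gcongr
      exact Set.ncard_le_ncard_of_injOn f hmaps hinj (intervalFamily_finite m K).unionClosure

/-- There is a constant `c > 0` such that for all `n` divisible by 4 with
`n ≥ 20`, the union-closure of `{S_{k₁} = {1,4} ∪ {k₁+1,…,n/2+k₁-2} : 5 ≤ k₁ ≤ n/4+2}`
has size at least `c·n²`. -/
theorem stmt_13 :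
    ∃ c : ℝ, 0 < c ∧ ∀ n : ℕ, 4 ∣ n → 20 ≤ n →
      c * (n : ℝ) ^ 2 ≤
        (unionClosure {A | ∃ k, 5 ≤ k ∧ k ≤ n / 4 + 2 ∧
          A = {1, 4} ∪ Finset.Icc (k + 1) (n / 2 + k - 2)}).ncard := by
  refine ⟨1 / 128, by norm_num, fun n hdvd hn => ?_⟩
  obtain ⟨q, rfl⟩ := hdvd
  change _ ≤ ((unionClosure (intervalFamily (4 * q / 2) (4 * q / 4 + 2))).ncard : ℝ)
  set N := (unionClosure (intervalFamily (4 * q / 2) (4 * q / 4 + 2))).ncard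
  have hbound : (q - 2) ^ 2 ≤ 2 * N := by
    have h := sq_le_two_mul_ncard_unionClosure_intervalFamily (m := 4 * q / 2)
      (K := 4 * q / 4 + 2) (by omega) (by omega)
    rwa [show 4 * q / 4 + 2 - 4 = q - 2 by omega] at h
  have hN : (4 * q) ^ 2 ≤ 128 * N :=
    calc (4 * q) ^ 2 ≤ 16 * (2 * (q - 2)) ^ 2 := by
          rw [mul_pow]; exact Nat.mul_le_mul_left _ (Nat.pow_le_pow_left (by omega) 2)
      _ = 32 * (q - 2) ^ 2 * 2 := by ring
      _ ≤ 128 * N := by omega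
  have hN' : ((4 * q : ℕ) : ℝ) ^ 2 ≤ 128 * N := by exact_mod_cast hN
  linarith
end
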